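/- arXiv:1708.05680 — 3 statements merged into one kernel-verified Lean document; each statement's English description precedes it below -/
import Mathlib

section
/- Mode 4L with fixed tree height h uses O(n^{(h-1)/h}) base-level nodes: if x = x(n) is the minimal root arity such that the Mode 4L tree of height h covers n blocks, then the number of base-level nodes, given by the (h-2)-fold iterated sum ∑_{i_{h-1}=2}^{1+x} ⋯ ∑_{i_2=2}^{1+i_3} i_2, is O(n^{(h-1)/h}). -/
/-- Maximum number of base-level blocks covered by a Mode 4L tree of height `h`
with root arity `x` (iterated sum with innermost summand `i_1`). -/
def maxBlocks : ℕ → ℕ → ℕ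
  | 0, x => x
  | 1, x => x
  | h + 2, x => ∑ a ∈ Finset.Icc 2 (1 + x), maxBlocks (h + 1) a

/-- Number of base-level nodes of a Mode 4L tree of height `h` with root arity
`x` (iterated sum with innermost summand `i_2`). -/
def baseNodes : ℕ → ℕ → ℕ
  | 0, x => x
  | 1, x => x
  | 2, x => x
  | h + 3, x => ∑ a ∈ Finset.Icc 2 (1 + x), baseNodes (h + 2) a

lemma maxBlocks_ge : ∀ h : ℕ, 1 ≤ h → ∀ x : ℕ, (x + h - 1).choose h ≤ maxBlocks h x
  | 0, hh, _ => absurd hh (by omega)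
  | 1, _, x => by simp [maxBlocks]
  | (k+2), _, x => by
    have ih := maxBlocks_ge (k+1) (by omega)
    rcases Nat.eq_zero_or_pos x with rfl | hx
    · simp [Nat.choose_eq_zero_of_lt (by omega : k + 2 - 1 < k + 2)]
    have key : ∑ a ∈ Finset.Icc 2 (1+x), (a + k).choose (k+1)
        = ∑ m ∈ Finset.Icc (k+2) (x+k+1), m.choose (k+1) := by
      rw [show Finset.Icc (k+2) (x+k+1) = Finset.Icc (2+k) (1+x+k) by ring_nf,
        ← Finset.map_add_right_Icc, Finset.sum_map]
      simp [addRightEmbedding]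
    have hs : ∑ m ∈ Finset.Icc (k+1) (x+k+1), m.choose (k+1)
        = (x+k+2).choose (k+2) := by
      have := Nat.sum_Icc_choose (x+k+1) (k+1)
      convert this using 2 <;> omega
    have hins : ∑ m ∈ Finset.Icc (k+1) (x+k+1), m.choose (k+1)
        = 1 + ∑ m ∈ Finset.Icc (k+2) (x+k+1), m.choose (k+1) := by
      have e : Finset.Icc (k+1) (x+k+1) = insert (k+1) (Finset.Icc (k+2) (x+k+1)) := by
        ext m; simp only [Finset.mem_Icc, Finset.mem_insert]; omega
      rw [e, Finset.sum_insert (by simp), Nat.choose_self]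
    have pascal : (x+k+2).choose (k+2) = (x+k+1).choose (k+1) + (x+k+1).choose (k+2) :=
      Nat.choose_succ_succ (x+k+1) (k+1)
    have hpos : 0 < (x+k+1).choose (k+1) := Nat.choose_pos (by omega)
    have step1 : (x + (k+2) - 1).choose (k+2)
        ≤ ∑ a ∈ Finset.Icc 2 (1+x), (a + k).choose (k+1) := by
      rw [key, show x + (k+2) - 1 = x+k+1 by omega]
      omega
    rw [show maxBlocks (k+2) x = ∑ a ∈ Finset.Icc 2 (1+x), maxBlocks (k+1) a from rfl]
    refine step1.trans (Finset.sum_le_sum fun a _ => ?_)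
    have h2 := ih a
    rwa [show a + (k+1) - 1 = a + k by omega] at h2
  termination_by h => h

lemma baseNodes_le : ∀ h : ℕ, 2 ≤ h → ∀ x : ℕ, baseNodes h x ≤ (x + h) ^ (h - 1)
  | 0, hh, _ => absurd hh (by omega)
  | 1, hh, _ => absurd hh (by omega)
  | 2, _, x => by simpa [baseNodes] using by omega
  | (k+3), _, x => by
    have ih := baseNodes_le (k+2) (by omega)
    rw [show baseNodes (k+3) x = ∑ a ∈ Finset.Icc 2 (1+x), baseNodes (k+2) a from rfl]
    calc ∑ a ∈ Finset.Icc 2 (1+x), baseNodes (k+2) a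
        ≤ ∑ a ∈ Finset.Icc 2 (1+x), (x + (k+3)) ^ (k+1) := by
          refine Finset.sum_le_sum fun a ha => ?_
          refine (ih a).trans ?_
          have := (Finset.mem_Icc.mp ha).2
          exact Nat.pow_le_pow_left (by omega) _
      _ = (Finset.Icc 2 (1+x)).card * (x + (k+3)) ^ (k+1) := by
          rw [Finset.sum_const, smul_eq_mul]
      _ ≤ (x + (k+3)) * (x + (k+3)) ^ (k+1) := by
          apply Nat.mul_le_mul_right
          rw [Nat.card_Icc]; omega
      _ = (x + (k+3)) ^ (k+3-1) := by rw [← pow_succ']; rfl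
  termination_by h => h

theorem mode4L_baseNodes_isBigO (h : ℕ) (hh : 2 ≤ h)
    (x : ℕ → ℕ)
    (hx : ∀ n : ℕ, 0 < x n ∧ n ≤ maxBlocks h (x n) ∧
      ∀ y : ℕ, 0 < y → n ≤ maxBlocks h y → x n ≤ y) :
    (fun n : ℕ => (baseNodes h (x n) : ℝ))
      =O[Filter.atTop] fun n : ℕ => (n : ℝ) ^ (((h : ℝ) - 1) / (h : ℝ)) := by
  have hK : ∀ n : ℕ, 1 ≤ n → (x n + h) ^ h ≤ (h+2)^h * h.factorial * n := by
    intro n hn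
    obtain ⟨hpos, hcov, hmin⟩ := hx n
    by_cases h1 : x n = 1
    · rw [h1]
      calc (1 + h)^h ≤ (h+2)^h := Nat.pow_le_pow_left (by omega) _
        _ = (h+2)^h * 1 * 1 := by ring
        _ ≤ (h+2)^h * h.factorial * n :=
            Nat.mul_le_mul (Nat.mul_le_mul_left _ h.factorial_pos) hn
    · obtain ⟨b, hab, hb1⟩ : ∃ b, x n = b + 1 ∧ 1 ≤ b := ⟨x n - 1, by omega, by omega⟩
      have hlt : maxBlocks h b < n := by
        by_contra hle
        push_neg at hle
        have := hmin b (by omega) hle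
        omega
      have hbb : b ^ h ≤ h.factorial * n := by
        calc b ^ h ≤ b.ascFactorial h := Nat.pow_succ_le_ascFactorial b h
          _ = h.factorial * (b + h - 1).choose h :=
              Nat.ascFactorial_eq_factorial_mul_choose' b h
          _ ≤ h.factorial * maxBlocks h b :=
              Nat.mul_le_mul_left _ (maxBlocks_ge h (by omega) b)
          _ ≤ h.factorial * n := Nat.mul_le_mul_left _ hlt.le
      have hsum : x n + h ≤ (h+2) * b := by rw [hab]; nlinarith
      calc (x n + h)^h ≤ ((h+2) * b)^h := Nat.pow_le_pow_left hsum h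
        _ = (h+2)^h * b^h := mul_pow _ _ _
        _ ≤ (h+2)^h * (h.factorial * n) := Nat.mul_le_mul_left _ hbb
        _ = (h+2)^h * h.factorial * n := (mul_assoc _ _ _).symm
  set K : ℝ := (((h+2)^h * h.factorial : ℕ) : ℝ) with hKdef
  have hK0 : (0:ℝ) ≤ K := Nat.cast_nonneg _
  have hhR : (2:ℝ) ≤ (h:ℝ) := by exact_mod_cast hh
  have hhne : (h:ℝ) ≠ 0 := by linarith
  rw [Asymptotics.isBigO_iff]
  refine ⟨K ^ (((h:ℝ) - 1) / (h:ℝ)), ?_⟩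
  filter_upwards [Filter.eventually_ge_atTop 1] with n hn
  have hn0 : (0:ℝ) ≤ (n:ℝ) := Nat.cast_nonneg _
  set a : ℕ := x n with hadef
  have base_nonneg : (0:ℝ) ≤ ((a + h : ℕ) : ℝ) := Nat.cast_nonneg _
  have e1 : (baseNodes h a : ℝ) ≤ ((a + h : ℕ) : ℝ) ^ (((h:ℝ)) - 1) := by
    have := baseNodes_le h hh a
    have hcast : (baseNodes h a : ℝ) ≤ (((a + h)^(h-1) : ℕ) : ℝ) := Nat.cast_le.mpr this
    rw [Nat.cast_pow] at hcast
    rwa [← Real.rpow_natCast ((a + h : ℕ) : ℝ) (h-1), Nat.cast_sub (by omega),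
      Nat.cast_one] at hcast
  have e2 : ((a + h : ℕ) : ℝ) ^ ((h:ℝ)) ≤ K * n := by
    have := hK n hn
    have hcast : (((a + h)^h : ℕ) : ℝ) ≤ (((h+2)^h * h.factorial * n : ℕ) : ℝ) :=
      Nat.cast_le.mpr this
    rw [Nat.cast_pow, Nat.cast_mul] at hcast
    rwa [Real.rpow_natCast]
  have hih : (0:ℝ) ≤ (h:ℝ)⁻¹ := inv_nonneg.mpr (by linarith)
  have e3 : ((a + h : ℕ) : ℝ) ≤ (K * n) ^ ((h:ℝ)⁻¹) := by
    have := Real.rpow_le_rpow (Real.rpow_nonneg base_nonneg _) e2 hih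
    rwa [← Real.rpow_mul base_nonneg, mul_inv_cancel₀ hhne, Real.rpow_one] at this
  have e4 : ((a + h : ℕ) : ℝ) ^ ((h:ℝ) - 1) ≤ ((K * n) ^ ((h:ℝ)⁻¹)) ^ ((h:ℝ) - 1) :=
    Real.rpow_le_rpow base_nonneg e3 (by linarith)
  have e5 : ((K * n) ^ ((h:ℝ)⁻¹)) ^ ((h:ℝ) - 1)
      = K ^ (((h:ℝ) - 1) / (h:ℝ)) * (n:ℝ) ^ (((h:ℝ) - 1) / (h:ℝ)) := by
    rw [← Real.rpow_mul (by positivity), show (h:ℝ)⁻¹ * ((h:ℝ) - 1) = ((h:ℝ)-1)/(h:ℝ) by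
      field_simp, Real.mul_rpow hK0 hn0]
  rw [Real.norm_of_nonneg (Nat.cast_nonneg _),
    Real.norm_of_nonneg (Real.rpow_nonneg hn0 _)]
  calc (baseNodes h a : ℝ) ≤ ((a + h : ℕ) : ℝ) ^ (((h:ℝ)) - 1) := e1
    _ ≤ ((K * n) ^ ((h:ℝ)⁻¹)) ^ ((h:ℝ) - 1) := e4
    _ = K ^ (((h:ℝ) - 1) / (h:ℝ)) * (n:ℝ) ^ (((h:ℝ) - 1) / (h:ℝ)) := e5
end

section
/- Let k(n) be the least integer k ≥ 2 such that ∑_{i=2}^{k} log log i ≥ log n, where terms for which log log i ≤ 0 are omitted. Then k(n) ~ log n / log log log n as n → ∞. -/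
open Real Filter Finset

private lemma loglog_mono {x y : ℝ} (hx : 2 ≤ x) (hxy : x ≤ y) :
    Real.log (Real.log x) ≤ Real.log (Real.log y) := by
  have h2 : (0:ℝ) < Real.log x := Real.log_pos (by linarith)
  exact Real.log_le_log h2 (Real.log_le_log (by linarith) hxy)

private lemma Sfun_le (m : ℕ) (hm : 2 ≤ m) :
    ∑ i ∈ Finset.Icc 2 m, max (Real.log (Real.log i)) 0
      ≤ (m : ℝ) * max (Real.log (Real.log m)) 0 := by
  have h := Finset.sum_le_card_nsmul (Finset.Icc 2 m)
    (fun i : ℕ => max (Real.log (Real.log i)) 0) (max (Real.log (Real.log m)) 0) ?_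
  · rw [Nat.card_Icc] at h
    refine h.trans ?_
    rw [nsmul_eq_mul]
    have : ((m + 1 - 2 : ℕ) : ℝ) ≤ (m : ℝ) := by
      have : m + 1 - 2 ≤ m := by omega
      exact_mod_cast this
    exact mul_le_mul_of_nonneg_right this (le_max_right _ _)
  · intro i hi
    simp only [Finset.mem_Icc] at hi
    refine max_le_max ?_ le_rfl
    exact loglog_mono (by exact_mod_cast hi.1) (by exact_mod_cast hi.2)

private lemma le_Sfun (j m : ℕ) (hj : 3 ≤ j) (hjm : j ≤ m) :
    ((m : ℝ) - j + 1) * Real.log (Real.log j)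
      ≤ ∑ i ∈ Finset.Icc 2 m, max (Real.log (Real.log i)) 0 := by
  have hsub : Finset.Icc j m ⊆ Finset.Icc 2 m := by
    apply Finset.Icc_subset_Icc (by omega) le_rfl
  have h1 : ∑ i ∈ Finset.Icc j m, max (Real.log (Real.log i)) 0
      ≤ ∑ i ∈ Finset.Icc 2 m, max (Real.log (Real.log i)) 0 :=
    Finset.sum_le_sum_of_subset_of_nonneg hsub (fun i _ _ => le_max_right _ _)
  refine le_trans ?_ h1
  have h2 := Finset.card_nsmul_le_sum (Finset.Icc j m)
    (fun i : ℕ => max (Real.log (Real.log i)) 0) (Real.log (Real.log j)) ?_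
  · rw [Nat.card_Icc, nsmul_eq_mul] at h2
    have hc : ((m + 1 - j : ℕ) : ℝ) = (m : ℝ) - j + 1 := by
      have := Nat.cast_sub (show j ≤ m + 1 by omega) (R := ℝ)
      push_cast at this ⊢
      linarith [this]
    rwa [hc] at h2
  · intro i hi
    simp only [Finset.mem_Icc] at hi
    refine le_trans ?_ (le_max_left _ _)
    have h2j : (2:ℝ) ≤ (j:ℕ) := by exact_mod_cast (show 2 ≤ j by omega)
    exact loglog_mono h2j (by exact_mod_cast hi.1)

private lemma eps_poly {e : ℝ} (h0 : 0 < e) (h1 : e ≤ 1) :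
    (1:ℝ) ≤ (1 - e/8)^2 * (1 + e) := by nlinarith [mul_nonneg h0.le h0.le]

private lemma log_le_two_sqrt {x : ℝ} (hx : 0 < x) : Real.log x ≤ 2 * Real.sqrt x := by
  have h := Real.log_le_sub_one_of_pos (Real.sqrt_pos.2 hx)
  rw [Real.log_sqrt hx.le] at h
  nlinarith [Real.sqrt_nonneg x]

set_option maxHeartbeats 2000000 in
theorem modeB3_height_asymptotic (k : ℕ → ℕ)
    (hk : ∀ n : ℕ, 2 ≤ k n ∧
      Real.log n ≤ ∑ i ∈ Finset.Icc 2 (k n), max (Real.log (Real.log i)) 0 ∧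
      ∀ m : ℕ, 2 ≤ m →
        Real.log n ≤ ∑ i ∈ Finset.Icc 2 m, max (Real.log (Real.log i)) 0 →
        k n ≤ m) :
    Filter.Tendsto (fun n : ℕ =>
      (k n : ℝ) / (Real.log n / Real.log (Real.log (Real.log n))))
      Filter.atTop (nhds 1) := by
  have hL : Tendsto (fun n : ℕ => Real.log n) atTop atTop :=
    Real.tendsto_log_atTop.comp tendsto_natCast_atTop_atTop
  have hLL : Tendsto (fun n : ℕ => Real.log (Real.log n)) atTop atTop :=
    Real.tendsto_log_atTop.comp hL
  have hD : Tendsto (fun n : ℕ => Real.log (Real.log (Real.log n))) atTop atTop :=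
    Real.tendsto_log_atTop.comp hLL
  have hlog2 : (0:ℝ) < Real.log 2 := Real.log_pos (by norm_num)
  have hlog16 : (0:ℝ) < Real.log 16 := Real.log_pos (by norm_num)
  -- key upper bound
  have key : ∀ ε : ℝ, 0 < ε → ε ≤ 1 → ∀ᶠ n : ℕ in atTop,
      (k n : ℝ) ≤ (1 + ε) * (Real.log n / Real.log (Real.log (Real.log n))) + 1 := by
    intro ε hε hε1
    filter_upwards [hD.eventually_ge_atTop (8 * Real.log 16 / ε),
      hLL.eventually_ge_atTop (16 * Real.log 2),
      hL.eventually_ge_atTop ((max 18 (128 / ε ^ 2)) ^ 2)] with n hDn hLLn hLn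
    set L : ℝ := Real.log n with hLdef
    set D : ℝ := Real.log (Real.log L) with hDdef
    have hD0 : 0 < D := lt_of_lt_of_le (by positivity) hDn
    have hL0 : 0 < L := lt_of_lt_of_le (by positivity) hLn
    have hlogL0 : 0 < Real.log L := lt_of_lt_of_le (by positivity) hLLn
    have hsL : max 18 (128 / ε ^ 2) ≤ Real.sqrt L :=
      (Real.le_sqrt (le_trans (by norm_num) (le_max_left _ _)) hL0.le).2 hLn
    have hsL18 : (18:ℝ) ≤ Real.sqrt L := le_trans (le_max_left _ _) hsL
    have hsL128 : 128 / ε ^ 2 ≤ Real.sqrt L := le_trans (le_max_right _ _) hsL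
    have hmulself : Real.sqrt L * Real.sqrt L = L := Real.mul_self_sqrt hL0.le
    have hDle : D ≤ 2 * Real.sqrt L := by
      have h1 : D ≤ Real.log L - 1 := Real.log_le_sub_one_of_pos hlogL0
      have h2 : Real.log L ≤ 2 * Real.sqrt L := log_le_two_sqrt hL0
      linarith
    -- the candidate m
    set m : ℕ := ⌈(1 + ε) * (L / D)⌉₊ with hmdef
    have hm_ge : (1 + ε) * (L / D) ≤ (m:ℝ) := Nat.le_ceil _
    have hm_le : (m:ℝ) ≤ (1 + ε) * (L / D) + 1 :=
      (Nat.ceil_lt_add_one (mul_nonneg (by linarith) (div_nonneg hL0.le hD0.le))).le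
    have hLD : Real.sqrt L / 2 ≤ L / D := by
      rw [div_le_div_iff₀ (by norm_num) hD0]
      nlinarith [Real.sqrt_nonneg L]
    have hmL : Real.sqrt L / 2 ≤ (m:ℝ) := by
      refine le_trans (le_trans hLD ?_) hm_ge
      nlinarith [div_nonneg hL0.le hD0.le]
    have hm9 : 9 ≤ m := by
      have : (9:ℝ) ≤ (m:ℝ) := by linarith
      exact_mod_cast this
    have hm0 : (0:ℝ) < (m:ℝ) := by
      have : (0:ℕ) < m := by omega
      exact_mod_cast this
    set j : ℕ := Nat.sqrt m with hjdef
    have hj3 : 3 ≤ j := Nat.le_sqrt.2 (by omega)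
    have hj1 : 1 ≤ j := by omega
    have hjm : j ≤ m := Nat.sqrt_le_self m
    have hjr_le : (j:ℝ) ≤ Real.sqrt m := by
      have h := Nat.sqrt_le' m
      have h' : ((j:ℝ)) ^ 2 ≤ (m:ℝ) := by exact_mod_cast h
      exact (Real.le_sqrt (by positivity) hm0.le).2 h'
    have hjr_ge : Real.sqrt m ≤ 2 * (j:ℝ) := by
      have h := Nat.lt_succ_sqrt' m
      have h' : (m:ℝ) < ((j:ℝ) + 1) ^ 2 := by exact_mod_cast h
      have hj1' : (1:ℝ) ≤ (j:ℝ) := by exact_mod_cast hj1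
      have : (m:ℝ) ≤ (2 * (j:ℝ)) ^ 2 := by nlinarith
      exact (Real.sqrt_le_left (by positivity)).2 this
    have hmm : Real.sqrt m * Real.sqrt m = (m:ℝ) := Real.mul_self_sqrt hm0.le
    -- log m lower bound
    have hlogm : (1/4) * Real.log L ≤ Real.log (m:ℝ) := by
      have h1 : Real.log (Real.sqrt L / 2) ≤ Real.log m :=
        Real.log_le_log (by linarith) hmL
      rw [Real.log_div (by linarith) (by norm_num), Real.log_sqrt hL0.le] at h1
      linarith
    -- log j lower bound
    have hlogj : (1/16) * Real.log L ≤ Real.log (j:ℝ) := by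
      have hsm0 : (0:ℝ) < Real.sqrt m := Real.sqrt_pos.2 hm0
      have h1 : Real.log (Real.sqrt m / 2) ≤ Real.log (j:ℝ) := by
        apply Real.log_le_log (by linarith) (by linarith)
      rw [Real.log_div (by linarith) (by norm_num), Real.log_sqrt hm0.le] at h1
      linarith
    -- log log j lower bound
    have hloglogj : D - Real.log 16 ≤ Real.log (Real.log (j:ℝ)) := by
      have h1 : Real.log (Real.log L / 16) ≤ Real.log (Real.log (j:ℝ)) := by
        apply Real.log_le_log (by positivity) (by linarith)
      rw [Real.log_div (by positivity) (by norm_num)] at h1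
      exact h1
    -- sqrt m small
    have hsm : Real.sqrt m ≤ (ε/8) * m := by
      have hm64 : 64 / ε ^ 2 ≤ (m:ℝ) := by
        have h' : 128 / ε ^ 2 / 2 ≤ (m:ℝ) := le_trans (by linarith) hmL
        have heq : 128 / ε ^ 2 / 2 = 64 / ε ^ 2 := by ring
        linarith [heq ▸ h']
      have h8e : 8 / ε ≤ Real.sqrt m := by
        refine (Real.le_sqrt (by positivity) hm0.le).2 ?_
        have heq : (8 / ε) ^ 2 = 64 / ε ^ 2 := by rw [div_pow]; norm_num
        rw [heq]
        exact hm64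
      have hes : (8:ℝ) ≤ ε * Real.sqrt m := by
        have h' := mul_le_mul_of_nonneg_left h8e hε.le
        have heq2 : ε * (8 / ε) = 8 := by field_simp
        linarith [heq2 ▸ h']
      have hfin : Real.sqrt (m:ℝ) * 8 ≤ Real.sqrt (m:ℝ) * (ε * Real.sqrt (m:ℝ)) :=
        mul_le_mul_of_nonneg_left hes (Real.sqrt_nonneg _)
      have heq3 : Real.sqrt (m:ℝ) * (ε * Real.sqrt (m:ℝ)) = ε * (m:ℝ) := by
        calc Real.sqrt (m:ℝ) * (ε * Real.sqrt (m:ℝ))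
            = ε * (Real.sqrt (m:ℝ) * Real.sqrt (m:ℝ)) := by ring
          _ = ε * (m:ℝ) := by rw [hmm]
      rw [heq3] at hfin
      linarith
    have hD16 : Real.log 16 ≤ (ε/8) * D := by
      rw [div_le_iff₀ hε] at hDn
      have heq4 : (ε/8) * D = D * ε / 8 := by ring
      linarith [heq4]
    -- the main chain
    have hmain : L ≤ ∑ i ∈ Finset.Icc 2 m, max (Real.log (Real.log i)) 0 := by
      have hS := le_Sfun j m hj3 hjm
      have hjmr : (j:ℝ) ≤ (m:ℝ) := by exact_mod_cast hjm
      have hDpos16 : 0 ≤ D - Real.log 16 := by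
        have h' : (ε/8) * D ≤ 1 * D := mul_le_mul_of_nonneg_right (by linarith) hD0.le
        linarith
      have step1 : ((m:ℝ) - Real.sqrt m) * (D - Real.log 16)
          ≤ ((m:ℝ) - j + 1) * Real.log (Real.log (j:ℝ)) := by
        apply mul_le_mul (by linarith) hloglogj hDpos16 (by linarith)
      have hmsm : (0:ℝ) ≤ (m:ℝ) - Real.sqrt m := by
        have h' : (ε/8) * (m:ℝ) ≤ 1 * (m:ℝ) :=
          mul_le_mul_of_nonneg_right (by linarith) hm0.le
        linarith
      have step2 : ((1 - ε/8) * m) * ((1 - ε/8) * D)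
          ≤ ((m:ℝ) - Real.sqrt m) * (D - Real.log 16) := by
        apply mul_le_mul (by linarith) (by linarith)
          (mul_nonneg (by linarith) hD0.le) hmsm
      have hmD : (1 + ε) * L ≤ (m:ℝ) * D := by
        have := mul_le_mul_of_nonneg_right hm_ge hD0.le
        have heq : (1 + ε) * (L / D) * D = (1 + ε) * L := by
          field_simp
        linarith [heq ▸ this]
      have step3 : L ≤ ((1 - ε/8) * m) * ((1 - ε/8) * D) := by
        have hq1 := eps_poly hε hε1
        have c2 : (1 - ε/8)^2 * ((1 + ε) * L) ≤ (1 - ε/8)^2 * ((m:ℝ) * D) :=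
          mul_le_mul_of_nonneg_left hmD (sq_nonneg _)
        have c3 : L ≤ (1 - ε/8)^2 * ((1 + ε) * L) := by
          have h' := mul_le_mul_of_nonneg_right hq1 hL0.le
          calc L = 1 * L := (one_mul L).symm
            _ ≤ (1 - ε/8)^2 * (1 + ε) * L := h'
            _ = (1 - ε/8)^2 * ((1 + ε) * L) := by ring
        have c5 : (1 - ε/8)^2 * ((m:ℝ) * D) = ((1 - ε/8) * m) * ((1 - ε/8) * D) := by
          ring
        rw [c5] at c2
        linarith
      linarith
    have hkm := (hk n).2.2 m (by omega) hmain
    have : (k n : ℝ) ≤ (m:ℝ) := by exact_mod_cast hkm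
    linarith
  -- lower bound
  have low : ∀ᶠ n : ℕ in atTop,
      Real.log n / Real.log (Real.log (Real.log n)) ≤ (k n : ℝ) := by
    filter_upwards [key 1 one_pos le_rfl, hD.eventually_ge_atTop 4,
      hL.eventually_ge_atTop 2] with n hkub hDn hLn
    set L : ℝ := Real.log n with hLdef
    set D : ℝ := Real.log (Real.log L) with hDdef
    have hD0 : (0:ℝ) < D := by linarith
    have hL0 : (0:ℝ) < L := by linarith
    have hLD4 : L / D ≤ L / 4 := by
      rw [div_le_div_iff₀ hD0 (by norm_num)]
      nlinarith
    have hkL : (k n : ℝ) ≤ L := by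
      have : (1 + 1) * (L / D) + 1 ≤ L := by linarith
      linarith
    have hk2 : (2:ℝ) ≤ (k n : ℝ) := by exact_mod_cast (hk n).1
    have hmax : max (Real.log (Real.log (k n : ℝ))) 0 ≤ D :=
      max_le (loglog_mono hk2 hkL) (by linarith)
    have hS := Sfun_le (k n) (hk n).1
    have hSn := (hk n).2.1
    have hkD : L ≤ (k n : ℝ) * D := by
      have h2 : (k n : ℝ) * max (Real.log (Real.log (k n : ℝ))) 0 ≤ (k n : ℝ) * D :=
        mul_le_mul_of_nonneg_left hmax (by linarith)
      calc L ≤ _ := hSn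
        _ ≤ _ := hS
        _ ≤ _ := h2
    exact (div_le_iff₀ hD0).2 hkD
  -- conclude
  refine tendsto_order.2 ⟨?_, ?_⟩
  · intro b hb
    filter_upwards [low, hD.eventually_gt_atTop 0, hL.eventually_gt_atTop 1]
      with n hlow hD0 hL0
    have hq : 0 < Real.log n / Real.log (Real.log (Real.log n)) :=
      div_pos (by linarith) hD0
    have h1 : (1:ℝ) ≤ (k n : ℝ) / (Real.log n / Real.log (Real.log (Real.log n))) :=
      (one_le_div hq).2 hlow
    linarith
  · intro b hb
    set ε : ℝ := min 1 ((b - 1) / 2) with hεdef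
    have hε : 0 < ε := lt_min one_pos (by linarith)
    have hε1 : ε ≤ 1 := min_le_left _ _
    have hε2 : ε ≤ (b - 1) / 2 := min_le_right _ _
    filter_upwards [key ε hε hε1, hD.eventually_gt_atTop 0,
      hLL.eventually_ge_atTop 1,
      hL.eventually_ge_atTop (max 1 ((16 / (b - 1)) ^ 2))] with n hub hD0 hLL1 hLn
    set L : ℝ := Real.log n with hLdef
    set D : ℝ := Real.log (Real.log L) with hDdef
    have hL0 : (0:ℝ) < L := lt_of_lt_of_le one_pos (le_trans (le_max_left _ _) hLn)
    have hsL : max 1 ((16 / (b - 1)) ^ 2) ≤ L := hLn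
    have hmulself : Real.sqrt L * Real.sqrt L = L := Real.mul_self_sqrt hL0.le
    have hsL0 : (0:ℝ) < Real.sqrt L := Real.sqrt_pos.2 hL0
    have hDle : D ≤ 2 * Real.sqrt L := by
      have h1 : D ≤ Real.log L - 1 := Real.log_le_sub_one_of_pos (by linarith)
      have h2 : Real.log L ≤ 2 * Real.sqrt L := log_le_two_sqrt hL0
      linarith
    have hsLb : 16 / (b - 1) ≤ Real.sqrt L := by
      have h0 : (0:ℝ) ≤ 16 / (b - 1) := div_nonneg (by norm_num) (by linarith)
      refine (Real.le_sqrt h0 hL0.le).2 (le_trans (le_max_right _ _) hLn)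
    have hDL : D / L ≤ (b - 1) / 8 := by
      have h1 : D / L ≤ 2 / Real.sqrt L := by
        rw [div_le_div_iff₀ hL0 hsL0]
        nlinarith [mul_nonneg (show (0:ℝ) ≤ 2 * Real.sqrt L - D by linarith) hsL0.le]
      have h2 : 2 / Real.sqrt L ≤ (b - 1) / 8 := by
        rw [div_le_div_iff₀ hsL0 (by norm_num)]
        have hb1 : (0:ℝ) < b - 1 := by linarith
        rw [div_le_iff₀ hb1] at hsLb
        linarith
      linarith
    have hq : 0 < L / D := div_pos hL0 hD0
    have hratio : (k n : ℝ) / (L / D) ≤ (1 + ε) + D / L := by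
      have h1 : (k n : ℝ) / (L / D) ≤ ((1 + ε) * (L / D) + 1) / (L / D) :=
        (div_le_div_iff_of_pos_right hq).2 hub
      have heq : ((1 + ε) * (L / D) + 1) / (L / D) = (1 + ε) + D / L := by
        field_simp
      linarith [heq ▸ h1]
    have : (1 + ε) + D / L ≤ 1 + (b - 1) / 2 + (b - 1) / 8 := by linarith
    calc (k n : ℝ) / (L / D) ≤ (1 + ε) + D / L := hratio
      _ ≤ 1 + (b - 1) / 2 + (b - 1) / 8 := this
      _ < b := by linarith
end

section
/- Let k_1(n) be the least integer k such that ∑_{j=1}^{k} ⌈log^{1+ε}(c+j) / log log (c+j)⌉ ≥ n, for fixed integer c > 1 and fixed real 0 < ε < 1. Then k_1(n) ~ n · log log n / (log n)^{1+ε} as n → ∞. -/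
open Real Filter Finset

noncomputable def gg (ε : ℝ) (x : ℝ) : ℝ := Real.log x ^ (1+ε) / Real.log (Real.log x)

noncomputable def EE : ℝ := Real.exp (Real.exp 1)

lemma EE_pos : 0 < EE := Real.exp_pos _
lemma three_le_EE : (3:ℝ) ≤ EE := by
  have h1 : (2:ℝ) ≤ Real.exp 1 := by have := Real.add_one_le_exp (1:ℝ); linarith
  have h2 : (3:ℝ) ≤ Real.exp 2 := by have := Real.add_one_le_exp (2:ℝ); linarith
  exact le_trans h2 (Real.exp_le_exp.2 h1)

lemma log_ge_e_of_EE {x : ℝ} (hx : EE ≤ x) : Real.exp 1 ≤ Real.log x := by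
  have := Real.log_le_log (Real.exp_pos _) hx
  simpa [EE, Real.log_exp] using this

lemma loglog_ge_one {x : ℝ} (hx : EE ≤ x) : 1 ≤ Real.log (Real.log x) := by
  have h := log_ge_e_of_EE hx
  have := Real.log_le_log (Real.exp_pos 1) h
  rwa [Real.log_exp] at this

lemma log_gt_one_of_three {x : ℝ} (hx : (3:ℝ) ≤ x) : 1 < Real.log x := by
  have h3 : Real.exp 1 < 3 := by have := Real.exp_one_lt_d9; linarith
  calc (1:ℝ) = Real.log (Real.exp 1) := (Real.log_exp 1).symm
    _ < Real.log x := Real.log_lt_log (Real.exp_pos 1) (lt_of_lt_of_le h3 hx)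

lemma loglog_pos_of_three {x : ℝ} (hx : (3:ℝ) ≤ x) : 0 < Real.log (Real.log x) :=
  Real.log_pos (log_gt_one_of_three hx)

lemma gg_pos {ε x : ℝ} (hx : (3:ℝ) ≤ x) : 0 < gg ε x := by
  have h1 := log_gt_one_of_three hx
  exact div_pos (Real.rpow_pos_of_pos (by linarith) _) (loglog_pos_of_three hx)

lemma gg_expand {ε x : ℝ} (hx : (3:ℝ) ≤ x) :
    gg ε x = Real.log x ^ ε * (Real.log x / Real.log (Real.log x)) := by
  have h1 := log_gt_one_of_three hx
  rw [gg, Real.rpow_add (by linarith : (0:ℝ) < Real.log x), Real.rpow_one]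
  ring

lemma gg_mono {ε : ℝ} (hε : 0 < ε) {a b : ℝ} (ha : EE ≤ a) (hab : a ≤ b) :
    gg ε a ≤ gg ε b := by
  have hb : EE ≤ b := le_trans ha hab
  have hla : Real.exp 1 ≤ Real.log a := log_ge_e_of_EE ha
  have hlb : Real.exp 1 ≤ Real.log b := log_ge_e_of_EE hb
  have hlab : Real.log a ≤ Real.log b :=
    Real.log_le_log (lt_of_lt_of_le EE_pos ha) hab
  have h1a : (1:ℝ) ≤ Real.log a := le_trans (by have := Real.add_one_le_exp (1:ℝ); linarith) hla
  have hLLa : 1 ≤ Real.log (Real.log a) := loglog_ge_one ha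
  have hLLb : 1 ≤ Real.log (Real.log b) := loglog_ge_one hb
  have hkey : Real.log a / Real.log (Real.log a) ≤ Real.log b / Real.log (Real.log b) := by
    have h := Real.log_div_self_antitoneOn (a := Real.log a) (b := Real.log b) hla hlb hlab
    rw [div_le_div_iff₀ (by linarith) (by linarith)] at h ⊢
    nlinarith [h]
  have hpow : Real.log a ^ ε ≤ Real.log b ^ ε :=
    Real.rpow_le_rpow (by linarith) hlab (le_of_lt hε)
  rw [gg_expand (le_trans three_le_EE ha), gg_expand (le_trans three_le_EE hb)]
  have hpa : (0:ℝ) ≤ Real.log a ^ ε := Real.rpow_nonneg (by linarith) _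
  have hra : (0:ℝ) ≤ Real.log a / Real.log (Real.log a) := by positivity
  exact mul_le_mul hpow hkey hra (le_trans hpa hpow |>.trans (le_refl _) |> fun _ => Real.rpow_nonneg (by linarith) _) 

lemma gg_ge_one {ε x : ℝ} (hε : 0 < ε) (hx : EE ≤ x) : 1 ≤ gg ε x := by
  have h3 : (3:ℝ) ≤ x := le_trans three_le_EE hx
  have h1 := log_gt_one_of_three h3
  have hLL : 1 ≤ Real.log (Real.log x) := loglog_ge_one hx
  have hlog : Real.log (Real.log x) ≤ Real.log x := by
    have := Real.log_le_sub_one_of_pos (x := Real.log x) (by linarith)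
    linarith
  rw [gg, le_div_iff₀ (by linarith)]
  calc 1 * Real.log (Real.log x) ≤ Real.log x := by linarith
    _ = Real.log x ^ (1:ℝ) := (Real.rpow_one _).symm
    _ ≤ Real.log x ^ (1+ε) := Real.rpow_le_rpow_of_exponent_le (by linarith) (by linarith)

noncomputable def BB : ℝ := Real.exp 2 / Real.log (Real.log 3)
noncomputable def FZ (c : ℕ) (ε : ℝ) (j : ℕ) : ℤ :=
  ⌈Real.log ((c : ℝ) + (j : ℝ)) ^ (1 + ε) / Real.log (Real.log ((c : ℝ) + (j : ℝ)))⌉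

lemma BB_pos : 0 < BB := div_pos (Real.exp_pos _) (loglog_pos_of_three (le_refl _))

lemma gg_le_BB {ε x : ℝ} (hε0 : 0 < ε) (hε1 : ε < 1) (hx3 : (3:ℝ) ≤ x) (hxE : x ≤ EE) :
    gg ε x ≤ BB := by
  have h1 := log_gt_one_of_three hx3
  have hLL3 : 0 < Real.log (Real.log 3) := loglog_pos_of_three (le_refl _)
  have hLLx : Real.log (Real.log 3) ≤ Real.log (Real.log x) := by
    apply Real.log_le_log (Real.log_pos (by norm_num))
    exact Real.log_le_log (by norm_num) hx3
  have hnum : Real.log x ^ (1+ε) ≤ Real.exp 2 := by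
    calc Real.log x ^ (1+ε) ≤ Real.log EE ^ (1+ε) := by
          apply Real.rpow_le_rpow (by linarith) (Real.log_le_log (by linarith) hxE) (by linarith)
      _ = Real.exp 1 ^ (1+ε) := by rw [EE, Real.log_exp]
      _ = Real.exp (1+ε) := Real.exp_one_rpow _
      _ ≤ Real.exp 2 := Real.exp_le_exp.2 (by linarith)
  rw [gg, BB]
  apply div_le_div₀ (le_of_lt (Real.exp_pos _)) hnum hLL3 hLLx

lemma tendsto_L : Filter.Tendsto (fun n:ℕ => Real.log n) atTop atTop :=
  Real.tendsto_log_atTop.comp tendsto_natCast_atTop_atTop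

lemma tendsto_LL : Filter.Tendsto (fun n:ℕ => Real.log (Real.log n)) atTop atTop :=
  Real.tendsto_log_atTop.comp tendsto_L

lemma tendsto_LL_div_L :
    Filter.Tendsto (fun n:ℕ => Real.log (Real.log n) / Real.log n) atTop (nhds 0) :=
  (Real.isLittleO_log_id_atTop.tendsto_div_nhds_zero).comp tendsto_L

lemma log_ratio (a : ℕ → ℝ)
    (h1 : ∀ᶠ n : ℕ in atTop, (n:ℝ) / Real.log n ^ (3:ℕ) ≤ a n)
    (h2 : ∀ᶠ n : ℕ in atTop, a n ≤ (n:ℝ) * Real.log n ^ (3:ℕ)) :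
    Filter.Tendsto (fun n => Real.log (a n) / Real.log n) atTop (nhds 1) ∧
    Filter.Tendsto (fun n => Real.log (Real.log (a n)) / Real.log (Real.log n)) atTop (nhds 1) := by
  have hL10 : ∀ᶠ n : ℕ in atTop, (10:ℝ) ≤ Real.log n := tendsto_L.eventually_ge_atTop 10
  have hLL1 : ∀ᶠ n : ℕ in atTop, (1:ℝ) ≤ Real.log (Real.log n) := tendsto_LL.eventually_ge_atTop 1
  have hsmall : ∀ᶠ n : ℕ in atTop,
      3 * Real.log (Real.log n) / Real.log n ≤ 1/2 := by
    have := tendsto_LL_div_L.eventually (eventually_le_nhds (show (0:ℝ) < 1/6 by norm_num))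
    filter_upwards [this, hL10, hLL1] with n h hA hB
    have hL : (0:ℝ) < Real.log n := by linarith
    rw [div_le_div_iff₀ hL (by norm_num)] at h ⊢ <;> nlinarith
  have hn1 : ∀ᶠ n : ℕ in atTop, (1:ℝ) ≤ n := by
    filter_upwards [eventually_ge_atTop 1] with n h; exact_mod_cast h
  -- sandwich for log (a n)
  have key : ∀ᶠ n : ℕ in atTop,
      Real.log n - 3 * Real.log (Real.log n) ≤ Real.log (a n) ∧
      Real.log (a n) ≤ Real.log n + 3 * Real.log (Real.log n) := by
    filter_upwards [h1, h2, hL10, hLL1, hn1] with n ha1 ha2 hA hB hn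
    have hL : (0:ℝ) < Real.log n := by linarith
    have hnpos : (0:ℝ) < n := by linarith
    have hq : (0:ℝ) < (n:ℝ) / Real.log n ^ (3:ℕ) := by positivity
    constructor
    · calc Real.log n - 3 * Real.log (Real.log n)
          = Real.log ((n:ℝ) / Real.log n ^ (3:ℕ)) := by
            rw [Real.log_div (by positivity) (by positivity), Real.log_pow]; push_cast; ring
        _ ≤ Real.log (a n) := Real.log_le_log hq ha1
    · calc Real.log (a n) ≤ Real.log ((n:ℝ) * Real.log n ^ (3:ℕ)) :=
            Real.log_le_log (lt_of_lt_of_le hq ha1) ha2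
        _ = Real.log n + 3 * Real.log (Real.log n) := by
            rw [Real.log_mul (by positivity) (by positivity), Real.log_pow]; push_cast; ring
  have hfirst : Filter.Tendsto (fun n => Real.log (a n) / Real.log n) atTop (nhds 1) := by
    apply tendsto_of_tendsto_of_tendsto_of_le_of_le'
      (g := fun n : ℕ => 1 - 3 * Real.log (Real.log n) / Real.log n)
      (h := fun n : ℕ => 1 + 3 * Real.log (Real.log n) / Real.log n)
    · simpa [mul_div_assoc] using tendsto_const_nhds.sub (tendsto_LL_div_L.const_mul 3)
    · simpa [mul_div_assoc] using tendsto_const_nhds.add (tendsto_LL_div_L.const_mul 3)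
    · filter_upwards [key, hL10] with n hk hA
      have hL : (0:ℝ) < Real.log n := by linarith
      rw [le_div_iff₀ hL]
      have : (1 - 3 * Real.log (Real.log n) / Real.log n) * Real.log n
          = Real.log n - 3 * Real.log (Real.log n) := by field_simp
      rw [this]; exact hk.1
    · filter_upwards [key, hL10] with n hk hA
      have hL : (0:ℝ) < Real.log n := by linarith
      rw [div_le_iff₀ hL]
      have : (1 + 3 * Real.log (Real.log n) / Real.log n) * Real.log n
          = Real.log n + 3 * Real.log (Real.log n) := by field_simp
      rw [this]; exact hk.2
  refine ⟨hfirst, ?_⟩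
  -- second part
  have key2 : ∀ᶠ n : ℕ in atTop,
      Real.log (Real.log n) + Real.log (1 - 3 * Real.log (Real.log n) / Real.log n)
        ≤ Real.log (Real.log (a n)) ∧
      Real.log (Real.log (a n)) ≤
        Real.log (Real.log n) + Real.log (1 + 3 * Real.log (Real.log n) / Real.log n) := by
    filter_upwards [key, hL10, hLL1, hsmall] with n hk hA hB hs
    have hL : (0:ℝ) < Real.log n := by linarith
    have hLLn : (0:ℝ) < Real.log (Real.log n) := by linarith
    have e1 : Real.log n - 3 * Real.log (Real.log n)
        = Real.log n * (1 - 3 * Real.log (Real.log n) / Real.log n) := by field_simp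
    have e2 : Real.log n + 3 * Real.log (Real.log n)
        = Real.log n * (1 + 3 * Real.log (Real.log n) / Real.log n) := by field_simp
    have hpos1 : (0:ℝ) < 1 - 3 * Real.log (Real.log n) / Real.log n := by
      nlinarith [hs]
    have hpos2 : (0:ℝ) < 1 + 3 * Real.log (Real.log n) / Real.log n := by positivity
    constructor
    · have := Real.log_le_log (by nlinarith) (e1 ▸ hk.1)
      rwa [Real.log_mul (ne_of_gt hL) (ne_of_gt hpos1)] at this
    · have := Real.log_le_log (by nlinarith [hk.1]) hk.2
      rw [e2, Real.log_mul (ne_of_gt hL) (ne_of_gt hpos2)] at this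
      exact this
  have hlim0 : Filter.Tendsto
      (fun n : ℕ => 3 * Real.log (Real.log n) / Real.log n) atTop (nhds 0) := by
    simpa [mul_div_assoc] using (tendsto_LL_div_L.const_mul 3)
  have hlog1m : Filter.Tendsto
      (fun n : ℕ => Real.log (1 - 3 * Real.log (Real.log n) / Real.log n)) atTop (nhds 0) := by
    have : Filter.Tendsto (fun n : ℕ => 1 - 3 * Real.log (Real.log n) / Real.log n)
        atTop (nhds 1) := by simpa using tendsto_const_nhds.sub hlim0
    have hc := (Real.continuousAt_log (by norm_num : (1:ℝ) ≠ 0)).tendsto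
    simpa [Real.log_one, Function.comp_def] using hc.comp this
  have hlog1p : Filter.Tendsto
      (fun n : ℕ => Real.log (1 + 3 * Real.log (Real.log n) / Real.log n)) atTop (nhds 0) := by
    have : Filter.Tendsto (fun n : ℕ => 1 + 3 * Real.log (Real.log n) / Real.log n)
        atTop (nhds 1) := by simpa using tendsto_const_nhds.add hlim0
    have hc := (Real.continuousAt_log (by norm_num : (1:ℝ) ≠ 0)).tendsto
    simpa [Real.log_one, Function.comp_def] using hc.comp this
  have hinvLL : Filter.Tendsto (fun n : ℕ => (Real.log (Real.log n))⁻¹) atTop (nhds 0) :=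
    tendsto_LL.inv_tendsto_atTop
  apply tendsto_of_tendsto_of_tendsto_of_le_of_le'
    (g := fun n : ℕ => 1 + Real.log (1 - 3 * Real.log (Real.log n) / Real.log n)
        * (Real.log (Real.log n))⁻¹)
    (h := fun n : ℕ => 1 + Real.log (1 + 3 * Real.log (Real.log n) / Real.log n)
        * (Real.log (Real.log n))⁻¹)
  · simpa using tendsto_const_nhds.add (hlog1m.mul hinvLL)
  · simpa using tendsto_const_nhds.add (hlog1p.mul hinvLL)
  · filter_upwards [key2, hLL1] with n hk hB
    have hLLn : (0:ℝ) < Real.log (Real.log n) := by linarith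
    rw [le_div_iff₀ hLLn]
    have : (1 + Real.log (1 - 3 * Real.log (Real.log n) / Real.log n)
        * (Real.log (Real.log n))⁻¹) * Real.log (Real.log n)
        = Real.log (Real.log n) + Real.log (1 - 3 * Real.log (Real.log n) / Real.log n) := by
      field_simp
    rw [this]; exact hk.1
  · filter_upwards [key2, hLL1] with n hk hB
    have hLLn : (0:ℝ) < Real.log (Real.log n) := by linarith
    rw [div_le_iff₀ hLLn]
    have : (1 + Real.log (1 + 3 * Real.log (Real.log n) / Real.log n)
        * (Real.log (Real.log n))⁻¹) * Real.log (Real.log n)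
        = Real.log (Real.log n) + Real.log (1 + 3 * Real.log (Real.log n) / Real.log n) := by
      field_simp
    rw [this]; exact hk.2

lemma tendsto_n_div_L3 :
    Filter.Tendsto (fun n:ℕ => (n:ℝ) / Real.log n ^ (3:ℕ)) atTop atTop := by
  have h0 : Filter.Tendsto (fun n:ℕ => Real.log n ^ (3:ℕ) / n) atTop (nhds 0) := by
    have := Real.tendsto_pow_log_div_mul_add_atTop 1 0 3 one_ne_zero
    have h := this.comp (tendsto_natCast_atTop_atTop (R := ℝ))
    simpa [Function.comp_def] using h
  have hpos : ∀ᶠ n : ℕ in atTop, Real.log n ^ (3:ℕ) / n ∈ Set.Ioi (0:ℝ) := by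
    filter_upwards [tendsto_L.eventually_ge_atTop 1, eventually_ge_atTop 1] with n h1 h2
    have : (0:ℝ) < n := by exact_mod_cast Nat.lt_of_lt_of_le Nat.zero_lt_one h2
    exact Set.mem_Ioi.2 (by positivity)
  have := (tendsto_nhdsWithin_iff.2 ⟨h0, hpos⟩).comp (tendsto_id (α := ℕ))
  have h2 := tendsto_inv_nhdsGT_zero.comp this
  refine h2.congr fun n => ?_
  simp [Function.comp, inv_div]

lemma gg_ratio (ε : ℝ) (hε0 : 0 < ε) (a : ℕ → ℝ)
    (h1 : ∀ᶠ n : ℕ in atTop, (n:ℝ) / Real.log n ^ (3:ℕ) ≤ a n)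
    (h2 : ∀ᶠ n : ℕ in atTop, a n ≤ (n:ℝ) * Real.log n ^ (3:ℕ)) :
    Filter.Tendsto (fun n => gg ε (a n) * Real.log (Real.log n) / Real.log n ^ (1+ε))
      atTop (nhds 1) := by
  obtain ⟨hL1, hLL1⟩ := log_ratio a h1 h2
  have haT : Filter.Tendsto a atTop atTop :=
    tendsto_atTop_mono' _ h1 tendsto_n_div_L3
  have hev : ∀ᶠ n : ℕ in atTop,
      gg ε (a n) * Real.log (Real.log n) / Real.log n ^ (1+ε)
        = (Real.log (a n) / Real.log n) ^ (1+ε)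
          * (Real.log (Real.log n) / Real.log (Real.log (a n))) := by
    filter_upwards [haT.eventually_ge_atTop EE, tendsto_L.eventually_ge_atTop 1] with n hE hl
    have h3 : (3:ℝ) ≤ a n := le_trans three_le_EE hE
    have hLa : (0:ℝ) ≤ Real.log (a n) := by have := log_gt_one_of_three h3; linarith
    rw [gg, div_rpow hLa (by linarith : (0:ℝ) ≤ Real.log n)]
    ring
  have T1 : Filter.Tendsto
      (fun n : ℕ => (Real.log (a n) / Real.log n) ^ (1+ε)) atTop (nhds 1) := by
    have := hL1.rpow (tendsto_const_nhds (x := 1+ε)) (Or.inl one_ne_zero)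
    simpa using this
  have T2 : Filter.Tendsto
      (fun n : ℕ => Real.log (Real.log n) / Real.log (Real.log (a n))) atTop (nhds 1) := by
    have := hLL1.inv₀ one_ne_zero
    simp only [inv_div] at this
    simpa using this
  have hT := T1.mul T2
  rw [mul_one] at hT
  exact Filter.Tendsto.congr' (hev.mono fun n h => h.symm) hT

lemma tendsto_gx0 (ε : ℝ) (hε0 : 0 < ε) :
    Filter.Tendsto (fun n:ℕ => Real.log n ^ (1+ε) / Real.log (Real.log n)) atTop atTop := by
  apply tendsto_atTop_mono' atTop
    (show ∀ᶠ n : ℕ in atTop, Real.log n ^ ε ≤ Real.log n ^ (1+ε) / Real.log (Real.log n) from ?_)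
    ((tendsto_rpow_atTop hε0).comp tendsto_L)
  filter_upwards [tendsto_L.eventually_ge_atTop 1, tendsto_LL.eventually_ge_atTop 1,
    eventually_ge_atTop 3] with n hl hll h3
  have hLpos : (0:ℝ) < Real.log n := by linarith
  have hLL_le_L : Real.log (Real.log n) ≤ Real.log n := by
    have := Real.log_le_sub_one_of_pos hLpos; linarith
  rw [le_div_iff₀ (by linarith : (0:ℝ) < Real.log (Real.log n))]
  calc Real.log n ^ ε * Real.log (Real.log n) ≤ Real.log n ^ ε * Real.log n := by
        apply mul_le_mul_of_nonneg_left hLL_le_L (Real.rpow_nonneg (by linarith) _)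
    _ = Real.log n ^ (1+ε) := by
        rw [Real.rpow_add hLpos, Real.rpow_one]; ring
lemma tendsto_gx0_div_n (ε : ℝ) (hε0 : 0 < ε) (hε1 : ε < 1) :
    Filter.Tendsto (fun n:ℕ => Real.log n ^ (1+ε) / Real.log (Real.log n) / n)
      atTop (nhds 0) := by
  have hupper : Filter.Tendsto (fun n:ℕ => Real.log n ^ (2:ℕ) / n) atTop (nhds 0) := by
    have := Real.tendsto_pow_log_div_mul_add_atTop 1 0 2 one_ne_zero
    have h := this.comp (tendsto_natCast_atTop_atTop (R := ℝ))
    simpa [Function.comp_def] using h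
  apply tendsto_of_tendsto_of_tendsto_of_le_of_le' tendsto_const_nhds hupper
  · filter_upwards [tendsto_L.eventually_ge_atTop 1, tendsto_LL.eventually_ge_atTop 1,
      eventually_ge_atTop 1] with n hl hll h1
    have : (0:ℝ) < n := by exact_mod_cast h1
    positivity
  · filter_upwards [tendsto_L.eventually_ge_atTop 1, tendsto_LL.eventually_ge_atTop 1,
      eventually_ge_atTop 1] with n hl hll h1
    have hn : (0:ℝ) < n := by exact_mod_cast h1
    have e1 : Real.log n ^ (1+ε) / Real.log (Real.log n) ≤ Real.log n ^ (1+ε) :=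
      div_le_self (Real.rpow_nonneg (by linarith) _) hll
    have e2 : Real.log n ^ (1+ε) ≤ Real.log n ^ ((2:ℝ)) :=
      Real.rpow_le_rpow_of_exponent_le hl (by linarith)
    have e3 : Real.log n ^ ((2:ℝ)) = Real.log n ^ (2:ℕ) := by
      rw [← Real.rpow_natCast]; norm_num
    gcongr
    exact e1.trans (e2.trans_eq e3)


lemma FZ_eq (c : ℕ) (ε : ℝ) (j : ℕ) : FZ c ε j = ⌈gg ε ((c:ℝ)+(j:ℝ))⌉ := rfl

lemma cj_ge_three {c : ℕ} (hc : 1 < c) {j : ℕ} (hj : 1 ≤ j) : (3:ℝ) ≤ (c:ℝ) + (j:ℝ) := by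
  have h1 : (2:ℝ) ≤ c := by exact_mod_cast hc
  have h2 : (1:ℝ) ≤ j := by exact_mod_cast hj
  linarith

lemma FZ_ge_one {c : ℕ} (hc : 1 < c) (ε : ℝ) {j : ℕ} (hj : 1 ≤ j) : 1 ≤ FZ c ε j := by
  rw [FZ_eq]
  exact Int.ceil_pos.2 (gg_pos (cj_ge_three hc hj))

lemma FZ_ge (c : ℕ) (ε : ℝ) (j : ℕ) : gg ε ((c:ℝ)+(j:ℝ)) ≤ (FZ c ε j : ℝ) := by
  rw [FZ_eq]; exact Int.le_ceil _

lemma FZ_le (c : ℕ) (ε : ℝ) (j : ℕ) : (FZ c ε j : ℝ) ≤ gg ε ((c:ℝ)+(j:ℝ)) + 1 := by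
  rw [FZ_eq]; exact le_of_lt (Int.ceil_lt_add_one _)

lemma gg_le_mix {c : ℕ} (hc : 1 < c) {ε : ℝ} (hε0 : 0 < ε) (hε1 : ε < 1)
    {j : ℕ} {y : ℝ} (hj : 1 ≤ j) (hjy : (c:ℝ)+(j:ℝ) ≤ y) (hy : EE ≤ y) :
    gg ε ((c:ℝ)+(j:ℝ)) ≤ gg ε y + BB := by
  have h3 := cj_ge_three hc hj
  have hKpos : (0:ℝ) < gg ε y := gg_pos (le_trans three_le_EE hy)
  by_cases hcase : (c:ℝ)+(j:ℝ) ≤ EE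
  · have := gg_le_BB hε0 hε1 h3 hcase
    linarith
  · push_neg at hcase
    have := gg_mono hε0 (le_of_lt hcase) hjy
    linarith [BB_pos]

lemma S_upper {c : ℕ} (hc : 1 < c) {ε : ℝ} (hε0 : 0 < ε) (hε1 : ε < 1)
    {K : ℕ} (hK : EE ≤ (c:ℝ)+(K:ℝ)) :
    ((∑ j ∈ Icc 1 K, FZ c ε j : ℤ) : ℝ) ≤ K * (gg ε ((c:ℝ)+(K:ℝ)) + BB + 1) := by
  push_cast
  calc ∑ j ∈ Icc 1 K, (FZ c ε j : ℝ)
      ≤ ∑ _j ∈ Icc 1 K, (gg ε ((c:ℝ)+(K:ℝ)) + BB + 1) := by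
        apply Finset.sum_le_sum
        intro j hj
        rw [Finset.mem_Icc] at hj
        have h1 := gg_le_mix hc hε0 hε1 hj.1
          (by exact_mod_cast add_le_add_right (Nat.cast_le.2 hj.2) (c:ℝ)) hK
        have h2 := FZ_le c ε j
        linarith
    _ = K * (gg ε ((c:ℝ)+(K:ℝ)) + BB + 1) := by
        rw [Finset.sum_const, Nat.card_Icc, nsmul_eq_mul]
        norm_num

set_option maxHeartbeats 2000000 in
lemma S_lower {c : ℕ} (hc : 1 < c) {ε : ℝ} (hε0 : 0 < ε) (hε1 : ε < 1)
    {δ : ℝ} (hδ0 : 0 < δ) (hδ1 : δ < 1) :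
    ∀ᶠ K : ℕ in atTop,
      (1-δ) * K * gg ε ((c:ℝ)+(K:ℝ)) ≤ ((∑ j ∈ Icc 1 K, FZ c ε j : ℤ) : ℝ) := by
  set η := δ/2 with hηdef
  have hη0 : 0 < η := by positivity
  have hη1 : η < 1/2 := by rw [hηdef]; linarith
  set m : ℕ → ℕ := fun K => ⌈η * K⌉₊ with hm
  have hKpos : ∀ᶠ K : ℕ in atTop, (1:ℝ) ≤ (K:ℝ) := by
    filter_upwards [eventually_ge_atTop 1] with K h; exact_mod_cast h
  have hmK_lb : ∀ K : ℕ, η * K ≤ m K := fun K => Nat.le_ceil _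
  have hmK_ub : ∀ K : ℕ, (m K : ℝ) ≤ η * K + 1 := by
    intro K
    exact le_of_lt (Nat.ceil_lt_add_one (by positivity))
  -- sandwiches for ratio lemma
  have s1 : ∀ᶠ K : ℕ in atTop, (K:ℝ) / Real.log K ^ (3:ℕ) ≤ (c:ℝ) + (m K : ℝ) := by
    filter_upwards [tendsto_L.eventually_ge_atTop (max 1 (1/η)), hKpos] with K hl hK1
    have hLK1 : (1:ℝ) ≤ Real.log K := le_trans (le_max_left _ _) hl
    have hLKη : 1/η ≤ Real.log K := le_trans (le_max_right _ _) hl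
    have hK0 : (0:ℝ) < K := by linarith
    have hcube : 1/η ≤ Real.log K ^ (3:ℕ) :=
      le_trans hLKη (le_self_pow₀ hLK1 (by norm_num))
    have h2 : 1 ≤ Real.log K ^ (3:ℕ) * η := (div_le_iff₀ hη0).mp hcube
    have h3 : (K:ℝ) / Real.log K ^ (3:ℕ) ≤ η * K := by
      rw [div_le_iff₀ (by positivity)]
      nlinarith
    have := hmK_lb K
    have hcnn : (0:ℝ) ≤ c := Nat.cast_nonneg c
    linarith
  have s2 : ∀ᶠ K : ℕ in atTop, (c:ℝ) + (m K : ℝ) ≤ (K:ℝ) * Real.log K ^ (3:ℕ) := by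
    filter_upwards [tendsto_L.eventually_ge_atTop ((c:ℝ)+2), hKpos] with K hl hK1
    have hLK : ((c:ℝ)+2) ≤ Real.log K := hl
    have hLK1 : (1:ℝ) ≤ Real.log K := by have : (0:ℝ) ≤ c := Nat.cast_nonneg c; linarith
    have hcube : ((c:ℝ)+2) ≤ Real.log K ^ (3:ℕ) :=
      le_trans hLK (le_self_pow₀ hLK1 (by norm_num))
    have := hmK_ub K
    nlinarith [(Nat.cast_nonneg c : (0:ℝ) ≤ c)]
  have t1 : ∀ᶠ K : ℕ in atTop, (K:ℝ) / Real.log K ^ (3:ℕ) ≤ (c:ℝ) + (K : ℝ) := by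
    filter_upwards [tendsto_L.eventually_ge_atTop 1, hKpos] with K hl hK1
    have hLK1 : (1:ℝ) ≤ Real.log K := hl
    have hc3 : (1:ℝ) ≤ Real.log K ^ (3:ℕ) := le_trans hLK1 (le_self_pow₀ hLK1 (by norm_num))
    have h3 : (K:ℝ) / Real.log K ^ (3:ℕ) ≤ K := by
      rw [div_le_iff₀ (by positivity)]
      nlinarith
    linarith [(Nat.cast_nonneg c : (0:ℝ) ≤ c)]
  have t2 : ∀ᶠ K : ℕ in atTop, (c:ℝ) + (K : ℝ) ≤ (K:ℝ) * Real.log K ^ (3:ℕ) := by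
    filter_upwards [tendsto_L.eventually_ge_atTop ((c:ℝ)+2), hKpos] with K hl hK1
    have hLK1 : (1:ℝ) ≤ Real.log K := by have : (0:ℝ) ≤ c := Nat.cast_nonneg c; linarith
    have hcube : ((c:ℝ)+2) ≤ Real.log K ^ (3:ℕ) :=
      le_trans hl (le_self_pow₀ hLK1 (by norm_num))
    nlinarith [(Nat.cast_nonneg c : (0:ℝ) ≤ c)]
  have T1 := gg_ratio ε hε0 (fun K => (c:ℝ) + (m K : ℝ)) s1 s2
  have T2 := gg_ratio ε hε0 (fun K => (c:ℝ) + (K : ℝ)) t1 t2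
  have hrat : Filter.Tendsto
      (fun K : ℕ => gg ε ((c:ℝ) + (m K : ℝ)) / gg ε ((c:ℝ) + (K : ℝ))) atTop (nhds 1) := by
    have hdiv := T1.div T2 one_ne_zero
    rw [div_one] at hdiv
    apply hdiv.congr'
    filter_upwards [tendsto_L.eventually_ge_atTop 1, tendsto_LL.eventually_ge_atTop 1,
      eventually_ge_atTop 1] with K hl hll hK1
    have hLpos : (0:ℝ) < Real.log K := by linarith
    have hLLpos : (0:ℝ) < Real.log (Real.log K) := by linarith
    have hrp : (0:ℝ) < Real.log K ^ (1+ε) := Real.rpow_pos_of_pos hLpos _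
    have hggK : (0:ℝ) < gg ε ((c:ℝ)+(K:ℝ)) := by
      apply gg_pos (cj_ge_three hc hK1)
    simp only [Pi.div_apply]
    field_simp
  have hggev : ∀ᶠ K : ℕ in atTop,
      (1-η) * gg ε ((c:ℝ)+(K:ℝ)) ≤ gg ε ((c:ℝ) + (m K : ℝ)) := by
    have := hrat.eventually (eventually_gt_nhds (show 1-η < 1 by linarith))
    filter_upwards [this, eventually_ge_atTop 1] with K h hK1
    have hggK : (0:ℝ) < gg ε ((c:ℝ)+(K:ℝ)) := gg_pos (cj_ge_three hc hK1)
    rw [lt_div_iff₀ hggK] at h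
    linarith
  -- eventual largeness
  have hmE : ∀ᶠ K : ℕ in atTop, EE ≤ (c:ℝ) + (m K : ℝ) := by
    have hmT : Filter.Tendsto (fun K : ℕ => (m K : ℝ)) atTop atTop := by
      apply tendsto_atTop_mono (fun K => hmK_lb K)
      exact (tendsto_natCast_atTop_atTop (R := ℝ)).const_mul_atTop hη0
    filter_upwards [hmT.eventually_ge_atTop EE] with K h
    linarith [(Nat.cast_nonneg c : (0:ℝ) ≤ c)]
  have hm1 : ∀ᶠ K : ℕ in atTop, 1 ≤ m K := by
    filter_upwards [eventually_ge_atTop 1] with K h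
    have : (0:ℝ) < η * K := by
      have : (1:ℝ) ≤ K := by exact_mod_cast h
      positivity
    exact Nat.ceil_pos.mpr this
  have hmleK : ∀ᶠ K : ℕ in atTop, m K ≤ K := by
    filter_upwards [tendsto_natCast_atTop_atTop (R := ℝ) |>.eventually_ge_atTop (2/(1-2*η) + 1)]
      with K h
    have hpos : (0:ℝ) < 1 - 2*η := by linarith
    have h' : 2/(1-2*η) ≤ (K:ℝ) - 1 := by linarith
    have h2 : (2:ℝ) ≤ ((K:ℝ)-1)*(1-2*η) := by
      have := (div_le_iff₀ hpos).mp h'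
      linarith [this]
    have hKnn : (0:ℝ) ≤ (K:ℝ) := Nat.cast_nonneg K
    have hub := hmK_ub K
    have hle : (m K : ℝ) ≤ (K:ℝ) := by nlinarith [mul_nonneg hη0.le hKnn]
    exact_mod_cast hle
  -- main chain
  filter_upwards [hggev, hmE, hm1, hmleK, hKpos] with K hgg hE h1 hK hK1
  have hggK0 : (0:ℝ) ≤ gg ε ((c:ℝ)+(K:ℝ)) := le_of_lt (gg_pos (cj_ge_three hc (by exact_mod_cast hK1)))
  push_cast
  have step1 : ∑ j ∈ Icc (m K) K, (FZ c ε j : ℝ) ≤ ∑ j ∈ Icc 1 K, (FZ c ε j : ℝ) := by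
    apply Finset.sum_le_sum_of_subset_of_nonneg
    · intro x hx
      rw [Finset.mem_Icc] at hx ⊢
      exact ⟨le_trans h1 hx.1, hx.2⟩
    · intro i hi _
      rw [Finset.mem_Icc] at hi
      have h := FZ_ge_one hc ε hi.1
      have : (0:ℤ) ≤ FZ c ε i := le_trans zero_le_one h
      exact_mod_cast this
  have step2 : ((K + 1 - m K : ℕ) : ℝ) * ((1-η) * gg ε ((c:ℝ)+(K:ℝ)))
      ≤ ∑ j ∈ Icc (m K) K, (FZ c ε j : ℝ) := by
    have := Finset.card_nsmul_le_sum (Icc (m K) K) (fun j => (FZ c ε j : ℝ))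
      ((1-η) * gg ε ((c:ℝ)+(K:ℝ))) ?_
    · rw [Nat.card_Icc] at this
      rw [← nsmul_eq_mul]
      exact this
    · intro j hj
      rw [Finset.mem_Icc] at hj
      have hmj : (c:ℝ) + (m K : ℝ) ≤ (c:ℝ) + (j:ℝ) := by
        have : (m K : ℝ) ≤ j := by exact_mod_cast hj.1
        linarith
      calc (1-η) * gg ε ((c:ℝ)+(K:ℝ)) ≤ gg ε ((c:ℝ) + (m K:ℝ)) := hgg
        _ ≤ gg ε ((c:ℝ)+(j:ℝ)) := gg_mono hε0 hE hmj
        _ ≤ (FZ c ε j : ℝ) := FZ_ge c ε j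
  have hcard : (1-η) * (K:ℝ) ≤ ((K + 1 - m K : ℕ) : ℝ) := by
    have hsub : ((K + 1 - m K : ℕ) : ℝ) = (K:ℝ) + 1 - (m K : ℝ) := by
      have : m K ≤ K + 1 := le_trans hK (Nat.le_succ K)
      push_cast [Nat.cast_sub this]
      ring
    rw [hsub]
    have := hmK_ub K
    linarith
  have final : (1-δ) * (K:ℝ) * gg ε ((c:ℝ)+(K:ℝ))
      ≤ ((K + 1 - m K : ℕ) : ℝ) * ((1-η) * gg ε ((c:ℝ)+(K:ℝ))) := by
    have hδη : δ = 2*η := by rw [hηdef]; ring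
    have hcard' := mul_le_mul_of_nonneg_left hcard (by linarith : (0:ℝ) ≤ 1-η)
    have hsq : (0:ℝ) ≤ η^2 * K := by positivity
    have h2 : (1-δ) * (K:ℝ) ≤ (1-η) * ((K + 1 - m K : ℕ) : ℝ) := by
      nlinarith [hcard', hsq]
    have := mul_le_mul_of_nonneg_right h2 hggK0
    nlinarith [this]
  exact final.trans (step2.trans step1)

set_option maxHeartbeats 2000000 in
theorem mode5L_num_processors (c : ℕ) (hc : 1 < c) (ε : ℝ)
    (hε0 : 0 < ε) (hε1 : ε < 1) (k₁ : ℕ → ℕ)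
    (hk : ∀ n : ℕ, 1 ≤ k₁ n ∧
      (n : ℤ) ≤ ∑ j ∈ Finset.Icc 1 (k₁ n),
        ⌈Real.log ((c : ℝ) + (j : ℝ)) ^ (1 + ε) /
          Real.log (Real.log ((c : ℝ) + (j : ℝ)))⌉ ∧
      ∀ m : ℕ, 1 ≤ m →
        (n : ℤ) ≤ ∑ j ∈ Finset.Icc 1 m,
          ⌈Real.log ((c : ℝ) + (j : ℝ)) ^ (1 + ε) /
            Real.log (Real.log ((c : ℝ) + (j : ℝ)))⌉ →
        k₁ n ≤ m) :
    Filter.Tendsto (fun n : ℕ =>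
      (k₁ n : ℝ) / ((n : ℝ) * Real.log (Real.log n) / Real.log n ^ (1 + ε)))
      Filter.atTop (nhds 1) := by
  have hk1 : ∀ n, 1 ≤ k₁ n := fun n => (hk n).1
  have hk2 : ∀ n : ℕ, (n:ℤ) ≤ ∑ j ∈ Icc 1 (k₁ n), FZ c ε j := fun n => (hk n).2.1
  have hk3 : ∀ n : ℕ, ∀ m : ℕ, 1 ≤ m → (n:ℤ) ≤ ∑ j ∈ Icc 1 m, FZ c ε j → k₁ n ≤ m :=
    fun n => (hk n).2.2
  -- k₁ n ≤ n for n ≥ 1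
  have hk_le : ∀ n : ℕ, 1 ≤ n → k₁ n ≤ n := by
    intro n hn
    apply hk3 n n hn
    calc (n:ℤ) = (Icc 1 n).card • (1:ℤ) := by rw [Nat.card_Icc]; simp
      _ ≤ ∑ j ∈ Icc 1 n, FZ c ε j :=
        Finset.card_nsmul_le_sum _ _ _ (fun j hj => FZ_ge_one hc ε (Finset.mem_Icc.1 hj).1)
  -- crude lower bound : n ≤ k₁ n * log n ^ 3 eventually
  have crude : ∀ᶠ n : ℕ in atTop, (n:ℝ) / Real.log n ^ (3:ℕ) ≤ (k₁ n : ℝ) := by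
    have hEcn : ∀ᶠ n : ℕ in atTop, EE ≤ (c:ℝ)+(n:ℝ) := by
      filter_upwards [(tendsto_natCast_atTop_atTop (R := ℝ)).eventually_ge_atTop EE] with n h
      linarith [(Nat.cast_nonneg c : (0:ℝ) ≤ c)]
    have hbound : ∀ᶠ n : ℕ in atTop,
        gg ε ((c:ℝ)+(n:ℝ)) + BB + 1 ≤ Real.log n ^ (3:ℕ) := by
      filter_upwards [hEcn, tendsto_L.eventually_ge_atTop (5 + BB),
        (tendsto_natCast_atTop_atTop (R := ℝ)).eventually_ge_atTop ((c:ℝ)+2),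
        eventually_ge_atTop 2] with n hE hL hcn hn2
      have hn1 : (1:ℝ) ≤ n := by linarith [(Nat.cast_nonneg c : (0:ℝ) ≤ c)]
      have hLL1 : 1 ≤ Real.log (Real.log ((c:ℝ)+n)) := loglog_ge_one hE
      have hcn_sq : (c:ℝ) + n ≤ (n:ℝ)^2 := by nlinarith [(Nat.cast_nonneg c : (0:ℝ) ≤ c)]
      have hLc : Real.log ((c:ℝ)+n) ≤ 2 * Real.log n := by
        calc Real.log ((c:ℝ)+n) ≤ Real.log ((n:ℝ)^2) :=
              Real.log_le_log (by linarith [(Nat.cast_nonneg c : (0:ℝ) ≤ c)]) hcn_sq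
          _ = 2 * Real.log n := by rw [Real.log_pow]; push_cast; ring
      have hL1 : (1:ℝ) ≤ Real.log n := by linarith [BB_pos]
      have hLc0 : (0:ℝ) ≤ Real.log ((c:ℝ)+n) := by
        have := log_gt_one_of_three (le_trans three_le_EE hE); linarith
      have hgg_le : gg ε ((c:ℝ)+n) ≤ Real.log ((c:ℝ)+n) ^ (2:ℕ) := by
        calc gg ε ((c:ℝ)+n) ≤ Real.log ((c:ℝ)+n) ^ (1+ε) := by
              rw [gg]; exact div_le_self (Real.rpow_nonneg hLc0 _) hLL1
          _ ≤ Real.log ((c:ℝ)+n) ^ ((2:ℝ)) := by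
              apply Real.rpow_le_rpow_of_exponent_le ?_ (by linarith)
              have := log_gt_one_of_three (le_trans three_le_EE hE); linarith
          _ = Real.log ((c:ℝ)+n) ^ (2:ℕ) := by rw [← Real.rpow_natCast]; norm_num
      have h4 : Real.log ((c:ℝ)+n) ^ (2:ℕ) ≤ 4 * Real.log n ^ (2:ℕ) := by nlinarith
      nlinarith [hgg_le, h4, hL, BB_pos, hL1]
    filter_upwards [hbound, hEcn, tendsto_L.eventually_ge_atTop 1,
      eventually_ge_atTop 1] with n hb hE hL hn1
    have hsum : (n:ℝ) ≤ (k₁ n : ℝ) * (gg ε ((c:ℝ)+n) + BB + 1) := by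
      have h0 : (n:ℝ) ≤ ((∑ j ∈ Icc 1 (k₁ n), FZ c ε j : ℤ):ℝ) := by exact_mod_cast hk2 n
      have h1 : ((∑ j ∈ Icc 1 (k₁ n), FZ c ε j : ℤ):ℝ)
          ≤ (k₁ n : ℝ) * (gg ε ((c:ℝ)+n) + BB + 1) := by
        push_cast
        calc ∑ j ∈ Icc 1 (k₁ n), (FZ c ε j:ℝ)
            ≤ ∑ _j ∈ Icc 1 (k₁ n), (gg ε ((c:ℝ)+(n:ℝ)) + BB + 1) := by
              apply Finset.sum_le_sum; intro j hj; rw [Finset.mem_Icc] at hj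
              have hjn : (c:ℝ)+(j:ℝ) ≤ (c:ℝ)+(n:ℝ) := by
                have : (j:ℝ) ≤ n := by exact_mod_cast le_trans hj.2 (hk_le n hn1)
                linarith
              have := gg_le_mix hc hε0 hε1 hj.1 hjn hE
              linarith [FZ_le c ε j]
          _ = (k₁ n:ℝ) * (gg ε ((c:ℝ)+(n:ℝ)) + BB + 1) := by
              rw [sum_const, Nat.card_Icc, nsmul_eq_mul]; norm_num
      linarith
    rw [div_le_iff₀ (pow_pos (by linarith : (0:ℝ) < Real.log n) 3)]
    have hknn : (0:ℝ) ≤ (k₁ n : ℝ) := Nat.cast_nonneg _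
    calc (n:ℝ) ≤ (k₁ n : ℝ) * (gg ε ((c:ℝ)+(n:ℝ)) + BB + 1) := hsum
      _ ≤ (k₁ n : ℝ) * Real.log n ^ (3:ℕ) := mul_le_mul_of_nonneg_left hb hknn
  -- k₁ tends to infinity
  have tendsto_k₁R : Filter.Tendsto (fun n => (k₁ n:ℝ)) atTop atTop :=
    tendsto_atTop_mono' _ crude tendsto_n_div_L3
  have tendsto_k₁N : Filter.Tendsto k₁ atTop atTop := by
    rwa [tendsto_natCast_atTop_iff] at tendsto_k₁R
  set a : ℕ → ℕ := fun n => k₁ n - 1 with ha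
  have tendsto_aN : Filter.Tendsto a atTop atTop :=
    (tendsto_sub_atTop_nat 1).comp tendsto_k₁N
  have tendsto_aR : Filter.Tendsto (fun n => (a n:ℝ)) atTop atTop :=
    tendsto_natCast_atTop_atTop.comp tendsto_aN
  have hacast : ∀ n, (a n : ℝ) = (k₁ n:ℝ) - 1 := by
    intro n
    rw [ha]
    push_cast [Nat.cast_sub (hk1 n)]
    ring
  -- eventual c + n ≤ n * log n ^ 3
  have hcn_ub : ∀ᶠ n : ℕ in atTop, (c:ℝ) + (n:ℝ) ≤ (n:ℝ) * Real.log n ^ (3:ℕ) := by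
    filter_upwards [tendsto_L.eventually_ge_atTop ((c:ℝ)+2), eventually_ge_atTop 1] with n hl h1
    have hn1 : (1:ℝ) ≤ n := by exact_mod_cast h1
    have hLK1 : (1:ℝ) ≤ Real.log n := by linarith [(Nat.cast_nonneg c : (0:ℝ) ≤ c)]
    have hcube : ((c:ℝ)+2) ≤ Real.log n ^ (3:ℕ) :=
      le_trans hl (le_self_pow₀ hLK1 (by norm_num))
    nlinarith [(Nat.cast_nonneg c : (0:ℝ) ≤ c)]
  -- sandwiches
  have sk1 : ∀ᶠ n : ℕ in atTop, (n:ℝ) / Real.log n ^ (3:ℕ) ≤ (c:ℝ) + (k₁ n:ℝ) := by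
    filter_upwards [crude] with n h
    linarith [(Nat.cast_nonneg c : (0:ℝ) ≤ c)]
  have sk2 : ∀ᶠ n : ℕ in atTop, (c:ℝ) + (k₁ n:ℝ) ≤ (n:ℝ) * Real.log n ^ (3:ℕ) := by
    filter_upwards [hcn_ub, eventually_ge_atTop 1] with n h h1
    have : (k₁ n : ℝ) ≤ n := by exact_mod_cast hk_le n h1
    linarith
  have sa1 : ∀ᶠ n : ℕ in atTop, (n:ℝ) / Real.log n ^ (3:ℕ) ≤ (c:ℝ) + (a n:ℝ) := by
    filter_upwards [crude] with n h
    rw [hacast n]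
    have : (2:ℝ) ≤ c := by exact_mod_cast hc
    linarith
  have sa2 : ∀ᶠ n : ℕ in atTop, (c:ℝ) + (a n:ℝ) ≤ (n:ℝ) * Real.log n ^ (3:ℕ) := by
    filter_upwards [sk2] with n h
    rw [hacast n]
    linarith
  have A1 := gg_ratio ε hε0 (fun n => (c:ℝ)+(k₁ n:ℝ)) sk1 sk2
  have A2 := gg_ratio ε hε0 (fun n => (c:ℝ)+(a n:ℝ)) sa1 sa2
  have hLLX : Filter.Tendsto
      (fun n : ℕ => Real.log (Real.log n) / Real.log n ^ (1+ε)) atTop (nhds 0) := by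
    have := (tendsto_gx0 ε hε0).inv_tendsto_atTop
    apply this.congr
    intro n
    simp [Pi.inv_apply, inv_div]
  -- Q and its limit
  have TQ : Filter.Tendsto
      (fun n : ℕ => (gg ε ((c:ℝ)+(k₁ n:ℝ)) + BB + 1)
        * Real.log (Real.log n) / Real.log n ^ (1+ε)) atTop (nhds 1) := by
    have h := A1.add ((hLLX).const_mul (BB+1))
    simp only [mul_zero, add_zero] at h
    apply h.congr
    intro n
    ring
  have TQi := TQ.inv₀ one_ne_zero
  rw [inv_one] at TQi
  have TRi := A2.inv₀ one_ne_zero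
  rw [inv_one] at TRi
  have Tu1 := tendsto_gx0_div_n ε hε0 hε1
  -- the metric argument
  rw [Metric.tendsto_nhds]
  intro ζ hζ
  set δ := min (1/2) (ζ/4) with hδdef
  have hδ0 : 0 < δ := lt_min (by norm_num) (by linarith)
  have hδhalf : δ ≤ 1/2 := min_le_left _ _
  have hδζ : δ ≤ ζ/4 := min_le_right _ _
  have hδ1 : δ < 1 := by linarith
  have h1δ : (0:ℝ) < 1-δ := by linarith
  have hkeyζ : (1-δ)⁻¹ < 1+ζ := by
    rw [inv_eq_one_div, div_lt_iff₀ h1δ]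
    nlinarith
  have TRHS : Filter.Tendsto
      (fun n : ℕ => Real.log n ^ (1+ε) / Real.log (Real.log n) / n
        + (1-δ)⁻¹ * ((gg ε ((c:ℝ)+(a n:ℝ)) * Real.log (Real.log n) / Real.log n ^ (1+ε))⁻¹))
      atTop (nhds ((1-δ)⁻¹)) := by
    have h := Tu1.add (TRi.const_mul ((1-δ)⁻¹))
    rw [zero_add, mul_one] at h
    exact h
  have eU := TRHS.eventually_lt_const hkeyζ
  have eQ := TQi.eventually_const_lt (show 1-ζ < 1 by linarith)
  have hSlow := S_lower hc hε0 hε1 hδ0 hδ1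
  have e6 : ∀ᶠ n : ℕ in atTop,
      (1-δ) * (a n : ℝ) * gg ε ((c:ℝ)+(a n:ℝ))
        ≤ ((∑ j ∈ Icc 1 (a n), FZ c ε j : ℤ) : ℝ) :=
    tendsto_aN.eventually hSlow
  have e5 : ∀ᶠ n : ℕ in atTop, (∑ j ∈ Icc 1 (a n), FZ c ε j : ℤ) < (n:ℤ) := by
    filter_upwards [tendsto_k₁N.eventually_ge_atTop 2] with n h2
    by_contra hcon
    push_neg at hcon
    have haa : a n = k₁ n - 1 := rfl
    have := hk3 n (a n) (by omega) hcon
    omega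
  have hE1 : ∀ᶠ n : ℕ in atTop, EE ≤ (c:ℝ) + (k₁ n : ℝ) := by
    filter_upwards [tendsto_k₁R.eventually_ge_atTop EE] with n h
    linarith [(Nat.cast_nonneg c : (0:ℝ) ≤ c)]
  have hE2 : ∀ᶠ n : ℕ in atTop, EE ≤ (c:ℝ) + (a n : ℝ) := by
    filter_upwards [tendsto_aR.eventually_ge_atTop EE] with n h
    linarith [(Nat.cast_nonneg c : (0:ℝ) ≤ c)]
  have hn3 : ∀ᶠ n : ℕ in atTop, (3:ℝ) ≤ (n:ℝ) := by
    filter_upwards [eventually_ge_atTop 3] with n h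
    exact_mod_cast h
  filter_upwards [eQ, eU, e5, e6, hE1, hE2, hn3, tendsto_k₁N.eventually_ge_atTop 2]
    with n hQlt hUlt he5 he6 hEk hEa h3 hk2'
  set L : ℝ := Real.log n with hLdef
  set LLn : ℝ := Real.log (Real.log n) with hLLdef
  set X : ℝ := Real.log n ^ (1+ε) with hXdef
  have hL1 : 1 < L := log_gt_one_of_three h3
  have hLL0 : 0 < LLn := loglog_pos_of_three h3
  have hX0 : 0 < X := Real.rpow_pos_of_pos (by linarith) _
  have hn0 : (0:ℝ) < n := by linarith
  have hgk : 0 < gg ε ((c:ℝ)+(k₁ n:ℝ)) := gg_pos (le_trans three_le_EE hEk)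
  have hga : 0 < gg ε ((c:ℝ)+(a n:ℝ)) := gg_pos (le_trans three_le_EE hEa)
  have hP0 : 0 < gg ε ((c:ℝ)+(k₁ n:ℝ)) + BB + 1 := by linarith [BB_pos]
  have hk₁1 : (1:ℝ) ≤ (k₁ n : ℝ) := by exact_mod_cast hk1 n
  -- the ratio
  have hρ : (k₁ n : ℝ) / ((n:ℝ) * LLn / X) = (k₁ n : ℝ) * X / ((n:ℝ) * LLn) :=
    div_div_eq_mul_div _ _ _
  -- lower bound : Q⁻¹ ≤ ρ
  have hnkP : (n:ℝ) ≤ (k₁ n : ℝ) * (gg ε ((c:ℝ)+(k₁ n:ℝ)) + BB + 1) := by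
    have h0 : (n:ℝ) ≤ ((∑ j ∈ Icc 1 (k₁ n), FZ c ε j : ℤ):ℝ) := by exact_mod_cast hk2 n
    have h1 := S_upper hc hε0 hε1 hEk
    linarith
  have hlow : ((gg ε ((c:ℝ)+(k₁ n:ℝ)) + BB + 1) * LLn / X)⁻¹
      ≤ (k₁ n : ℝ) / ((n:ℝ) * LLn / X) := by
    rw [hρ, inv_div, div_le_div_iff₀ (by positivity) (by positivity)]
    nlinarith [mul_le_mul_of_nonneg_right hnkP (le_of_lt (mul_pos hX0 hLL0))]
  -- upper bound : ρ ≤ RHS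
  have hkey2 : (1-δ) * (a n : ℝ) * gg ε ((c:ℝ)+(a n:ℝ)) < (n:ℝ) := by
    have h5 : ((∑ j ∈ Icc 1 (a n), FZ c ε j : ℤ):ℝ) < (n:ℝ) := by exact_mod_cast he5
    linarith
  have hup : (k₁ n : ℝ) / ((n:ℝ) * LLn / X)
      ≤ X / LLn / n + (1-δ)⁻¹ * ((gg ε ((c:ℝ)+(a n:ℝ)) * LLn / X)⁻¹) := by
    rw [hρ]
    have hsplit : (k₁ n : ℝ) * X / ((n:ℝ) * LLn)
        = (a n : ℝ) * X / ((n:ℝ) * LLn) + X / ((n:ℝ) * LLn) := by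
      rw [hacast n]
      field_simp
      ring
    rw [hsplit]
    have hb2 : X / ((n:ℝ) * LLn) = X / LLn / n := by
      rw [div_div]
      ring_nf
    have hb1 : (a n : ℝ) * X / ((n:ℝ) * LLn)
        ≤ (1-δ)⁻¹ * ((gg ε ((c:ℝ)+(a n:ℝ)) * LLn / X)⁻¹) := by
      rw [inv_div]
      have heq : (1-δ)⁻¹ * (X / (gg ε ((c:ℝ)+(a n:ℝ)) * LLn))
          = X / ((1-δ) * (gg ε ((c:ℝ)+(a n:ℝ)) * LLn)) := by
        rw [inv_eq_one_div]
        field_simp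
      rw [heq, div_le_div_iff₀ (by positivity) (by positivity)]
      nlinarith [mul_le_mul_of_nonneg_right (le_of_lt hkey2) (le_of_lt (mul_pos hX0 hLL0)),
        mul_pos hX0 hLL0, (Nat.cast_nonneg (a n) : (0:ℝ) ≤ a n)]
    linarith [hb1, hb2.le, hb2.ge]
  -- conclude
  rw [Real.dist_eq, abs_sub_lt_iff]
  constructor
  · -- ρ - 1 < ζ
    calc (k₁ n : ℝ) / ((n:ℝ) * LLn / X) - 1
        ≤ (X / LLn / n + (1-δ)⁻¹ * ((gg ε ((c:ℝ)+(a n:ℝ)) * LLn / X)⁻¹)) - 1 := by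
          linarith [hup]
      _ < (1+ζ) - 1 := by linarith [hUlt]
      _ = ζ := by ring
  · -- 1 - ρ < ζ
    have := le_trans (le_of_lt hQlt) hlow
    linarith
end
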